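/- arXiv:2407.21362 — 2 statements merged into one kernel-verified Lean document; each statement's English description precedes it below -/
import Mathlib

section
/- Let p be a prime, q = p^n, and D ⊆ 𝔽_q*. Let f : 𝔽_q → 𝔽_q be an additive bijection with f(0) = 0 such that f(x)/x ∈ D for all x ∈ 𝔽_q*. Define g(0) = 0 and g(x) = 1/f(x⁻¹) for x ≠ 0. Then every direction determined by g, i.e. every value (g(x)-g(y))/(x-y) with x ≠ y, lies in D·D⁻¹·D⁻¹. -/
/-!
Writing `d(u) = f(u)/u ∈ D`, one has `g(x) = d(x⁻¹)⁻¹ x`. For `x, y ≠ 0` additivity gives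
`f(y⁻¹ - x⁻¹) = f(y⁻¹) - f(x⁻¹)`, which after clearing denominators says that the direction
determined by `x` and `y` is `d(y⁻¹ - x⁻¹) d(x⁻¹)⁻¹ d(y⁻¹)⁻¹`. The directions through `0` are
`d(x⁻¹)⁻¹ = d d⁻¹ d⁻¹` with `d = d(x⁻¹)`.
-/

open Pointwise

section

variable {F : Type*} [Field F]

lemma mul_inv_mul_inv_mem {D : Set F} {a b c : F} (ha : a ∈ D) (hb : b ∈ D) (hc : c ∈ D) :
    a * b⁻¹ * c⁻¹ ∈ D * D⁻¹ * D⁻¹ :=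
  Set.mul_mem_mul (Set.mul_mem_mul ha (Set.inv_mem_inv.mpr hb)) (Set.inv_mem_inv.mpr hc)

lemma inv_mem_mul_inv_mul_inv {D : Set F} {d : F} (hd : d ∈ D) (hd0 : d ≠ 0) :
    d⁻¹ ∈ D * D⁻¹ * D⁻¹ := by
  rw [show d⁻¹ = d * d⁻¹ * d⁻¹ by rw [mul_inv_cancel₀ hd0, one_mul]]
  exact mul_inv_mul_inv_mem hd hd hd

lemma inv_apply_inv_div (f : F → F) (x : F) : (f x⁻¹)⁻¹ / x = (f x⁻¹ / x⁻¹)⁻¹ := by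
  rw [div_inv_eq_mul, mul_inv, div_eq_mul_inv]

lemma inv_apply_inv_slope {f : F → F} (hadd : ∀ u v : F, f (u + v) = f u + f v) {x y : F}
    (hx : x ≠ 0) (hy : y ≠ 0) (hfx : f x⁻¹ ≠ 0) (hfy : f y⁻¹ ≠ 0) :
    ((f x⁻¹)⁻¹ - (f y⁻¹)⁻¹) / (x - y) =
      f (y⁻¹ - x⁻¹) / (y⁻¹ - x⁻¹) * (f x⁻¹ / x⁻¹)⁻¹ * (f y⁻¹ / y⁻¹)⁻¹ := by
  have hsub : f (y⁻¹ - x⁻¹) = f y⁻¹ - f x⁻¹ := map_sub (AddMonoidHom.mk' f hadd) _ _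
  rw [hsub, inv_sub_inv hy hx]
  -- otherwise `field_simp` rewrites inside `f x⁻¹` and loses the hypothesis `hfx`
  generalize f x⁻¹ = u at *
  generalize f y⁻¹ = v at *
  field_simp

end

theorem stmt_3_general {F : Type*} [Field F]
    (D : Set F) (hD : D ⊆ {0}ᶜ)
    (f : F → F) (hadd : ∀ u v : F, f (u + v) = f u + f v)
    (hfD : ∀ x : F, x ≠ 0 → f x / x ∈ D)
    (g : F → F) (hg0 : g 0 = 0) (hg : ∀ x : F, x ≠ 0 → g x = (f x⁻¹)⁻¹) :
    ∀ x y : F, x ≠ y → (g x - g y) / (x - y) ∈ D * D⁻¹ * D⁻¹ := by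
  have hd0 : ∀ u ≠ 0, f u / u ≠ 0 := fun u hu => hD (hfD u hu)
  have hf0 : ∀ u ≠ 0, f u ≠ 0 := fun u hu => (div_ne_zero_iff.mp (hd0 u hu)).1
  have through_zero : ∀ x ≠ 0, (g x - g 0) / (x - 0) ∈ D * D⁻¹ * D⁻¹ := fun x hx => by
    rw [hg0, hg x hx, sub_zero, sub_zero, inv_apply_inv_div]
    exact inv_mem_mul_inv_mul_inv (hfD _ (inv_ne_zero hx)) (hd0 _ (inv_ne_zero hx))
  intro x y hxy
  rcases eq_or_ne x 0 with rfl | hx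
  · rw [← neg_sub (g y), ← neg_sub y, neg_div_neg_eq]
    exact through_zero y hxy.symm
  rcases eq_or_ne y 0 with rfl | hy
  · exact through_zero x hx
  rw [hg x hx, hg y hy, inv_apply_inv_slope hadd hx hy
    (hf0 _ (inv_ne_zero hx)) (hf0 _ (inv_ne_zero hy))]
  have hyx : y⁻¹ - x⁻¹ ≠ 0 := sub_ne_zero.mpr (inv_injective.ne hxy).symm
  exact mul_inv_mul_inv_mem (hfD _ hyx) (hfD _ (inv_ne_zero hx)) (hfD _ (inv_ne_zero hy))

theorem stmt_3 {p n : ℕ} (hp : p.Prime) (hn : 0 < n)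
    {F : Type*} [Field F] [Fintype F] (hF : Fintype.card F = p ^ n)
    (D : Set F) (hD : D ⊆ {0}ᶜ)
    (f : F → F) (hadd : ∀ u v : F, f (u + v) = f u + f v)
    (hbij : Function.Bijective f) (hf0 : f 0 = 0)
    (hfD : ∀ x : F, x ≠ 0 → f x / x ∈ D)
    (g : F → F) (hg0 : g 0 = 0) (hg : ∀ x : F, x ≠ 0 → g x = (f x⁻¹)⁻¹) :
    ∀ x y : F, x ≠ y → (g x - g y) / (x - y) ∈ D * D⁻¹ * D⁻¹ :=
  stmt_3_general D hD f hadd hfD g hg0 hg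
end

section
/- Let p be a prime, q = p^n. Suppose f(x) = Σ_{j=0}^{n-1} α_j x^(p^j) and g(x) = Σ_{j=0}^{n-1} β_j x^(p^j) are linearized polynomials over 𝔽_q such that f(x⁻¹)·g(x) = 1 for all x ∈ 𝔽_q*. Then the polynomial identity (Σ_j α_j X^(p^(n-1) - p^j))·(Σ_j β_j X^(p^j - 1)) = X^(p^(n-1) - 1) holds in 𝔽_q[X]. -/
/-!
Clearing denominators, `x^(p^(n-1)-1) · f(x⁻¹) g(x)` is the value at `x` of the left-hand side,
so both sides agree on `𝔽_q*`. Both have degree at most `2(p^(n-1) - 1) < q - 1`, and a polynomial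
of degree below `q - 1 = #𝔽_q*` is determined by its values on `𝔽_q*`.
-/

open Polynomial

theorem Nat.two_mul_pow_pred_sub_one_lt_pow_sub_one {p n : ℕ} (hp : 2 ≤ p) (hn : 0 < n) :
    2 * (p ^ (n - 1) - 1) < p ^ n - 1 := by
  have hpow : p * p ^ (n - 1) = p ^ n := mul_pow_sub_one hn.ne' p
  have hmul : 2 * p ^ (n - 1) ≤ p * p ^ (n - 1) := Nat.mul_le_mul_right _ hp
  have hpos : 0 < p ^ (n - 1) := pow_pos (by omega) _
  omega

namespace Polynomial

variable {F : Type*} [Field F]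

theorem eq_of_natDegree_lt_card_sub_one_of_eval_eq_of_ne_zero [Fintype F] {P Q : F[X]}
    (heval : ∀ x : F, x ≠ 0 → P.eval x = Q.eval x)
    (hdeg : max P.natDegree Q.natDegree < Fintype.card F - 1) : P = Q := by
  classical
  refine eq_of_natDegree_lt_card_of_eval_eq P Q Units.val_injective
    (fun u => heval u u.ne_zero) ?_
  rwa [Fintype.card_units]

theorem natDegree_sum_C_mul_X_pow_le {ι : Type*} (s : Finset ι) (a : ι → F) (d : ι → ℕ) {D : ℕ}
    (hd : ∀ j ∈ s, d j ≤ D) : (∑ j ∈ s, C (a j) * X ^ d j).natDegree ≤ D :=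
  natDegree_sum_le_of_forall_le _ _ fun j hj =>
    (natDegree_C_mul_le _ _).trans ((natDegree_X_pow (d j)).trans_le (hd j hj))

theorem eval_sum_C_mul_X_pow_sub {ι : Type*} (s : Finset ι) (a : ι → F) (e : ι → ℕ) {N : ℕ}
    (he : ∀ j ∈ s, e j ≤ N) {x : F} (hx : x ≠ 0) :
    (∑ j ∈ s, C (a j) * X ^ (N - e j)).eval x = x ^ N * ∑ j ∈ s, a j * x⁻¹ ^ e j := by
  rw [eval_finsetSum, Finset.mul_sum]
  refine Finset.sum_congr rfl fun j hj => ?_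
  rw [eval_mul, eval_C, eval_pow, eval_X, pow_sub₀ x hx (he j hj), inv_pow]
  ring

theorem eval_sum_C_mul_X_pow_sub_one {ι : Type*} (s : Finset ι) (a : ι → F) (e : ι → ℕ)
    (he : ∀ j ∈ s, 1 ≤ e j) {x : F} (hx : x ≠ 0) :
    (∑ j ∈ s, C (a j) * X ^ (e j - 1)).eval x = (∑ j ∈ s, a j * x ^ e j) * x⁻¹ := by
  rw [eval_finsetSum, Finset.sum_mul]
  refine Finset.sum_congr rfl fun j hj => ?_
  rw [eval_mul, eval_C, eval_pow, eval_X, pow_sub₀ x hx (he j hj), pow_one, mul_assoc]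

end Polynomial

theorem stmt_4 {p n : ℕ} (hp : p.Prime) (hn : 0 < n)
    {F : Type*} [Field F] [Fintype F] (hF : Fintype.card F = p ^ n)
    (α β : ℕ → F)
    (h : ∀ x : F, x ≠ 0 →
      (∑ j ∈ Finset.range n, α j * (x⁻¹) ^ (p ^ j)) *
        (∑ j ∈ Finset.range n, β j * x ^ (p ^ j)) = 1) :
    (∑ j ∈ Finset.range n, C (α j) * (X : F[X]) ^ (p ^ (n - 1) - p ^ j)) *
      (∑ j ∈ Finset.range n, C (β j) * (X : F[X]) ^ (p ^ j - 1)) =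
        (X : F[X]) ^ (p ^ (n - 1) - 1) := by
  have hexp_le : ∀ j ∈ Finset.range n, p ^ j ≤ p ^ (n - 1) := fun j hj =>
    Nat.pow_le_pow_right hp.pos (Nat.le_sub_one_of_lt (Finset.mem_range.mp hj))
  have hexp_pos : ∀ j, 1 ≤ p ^ j := fun j => Nat.one_le_pow _ _ hp.pos
  apply eq_of_natDegree_lt_card_sub_one_of_eval_eq_of_ne_zero
  · intro x hx
    rw [eval_mul, eval_sum_C_mul_X_pow_sub _ _ _ hexp_le hx,
      eval_sum_C_mul_X_pow_sub_one _ _ _ (fun j _ => hexp_pos j) hx, eval_pow, eval_X,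
      pow_sub₀ x hx (hexp_pos _), pow_one]
    linear_combination (x ^ p ^ (n - 1) * x⁻¹) * h x hx
  · have hdeg_α := natDegree_sum_C_mul_X_pow_le (Finset.range n) α (fun j => p ^ (n - 1) - p ^ j)
      fun j _ => Nat.sub_le_sub_left (hexp_pos j) (p ^ (n - 1))
    have hdeg_β := natDegree_sum_C_mul_X_pow_le (Finset.range n) β (fun j => p ^ j - 1)
      fun j hj => Nat.sub_le_sub_right (hexp_le j hj) 1
    have hbound := Nat.two_mul_pow_pred_sub_one_lt_pow_sub_one hp.two_le hn
    rw [natDegree_X_pow, hF]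
    refine max_lt (natDegree_mul_le.trans_lt ?_) ?_ <;> omega
end
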